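/- The function ln Ψ(σ), where Ψ(σ) = 2^(σ+6) · σ^(σ+2) · (2−σ)^(−(2−σ)²/2) · (2+σ)^(−(2+σ)²/2), is concave on the interval (0, 1.32]. -/

import Mathlib

open Real

noncomputable def Psi (σ : ℝ) : ℝ :=
  2 ^ (σ + 6) * σ ^ (σ + 2) * (2 - σ) ^ (-(2 - σ) ^ 2 / 2) * (2 + σ) ^ (-(2 + σ) ^ 2 / 2)

noncomputable def F (x : ℝ) : ℝ :=
  (x + 6) * Real.log 2 + (x + 2) * Real.log x
    + (-(2 - x) ^ 2 / 2) * Real.log (2 - x) + (-(2 + x) ^ 2 / 2) * Real.log (2 + x)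

noncomputable def F' (x : ℝ) : ℝ :=
  Real.log 2 + (Real.log x + (x + 2) / x)
    + ((2 - x) * Real.log (2 - x) + (2 - x) / 2) - ((2 + x) * Real.log (2 + x) + (2 + x) / 2)

noncomputable def F'' (x : ℝ) : ℝ :=
  1 / x - 2 / x ^ 2 - Real.log (2 - x) - Real.log (2 + x) - 3

lemma hasDerivAt_F {x : ℝ} (hx0 : 0 < x) (hx2 : x < 2) : HasDerivAt F (F' x) x := by
  have hxne : x ≠ 0 := ne_of_gt hx0
  have h2x : (2 : ℝ) - x ≠ 0 := by linarith
  have h2x' : (2 : ℝ) + x ≠ 0 := by linarith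
  have h1 : HasDerivAt (fun x : ℝ => (x + 6) * Real.log 2) (Real.log 2) x := by
    simpa using ((hasDerivAt_id x).add_const 6).mul_const (Real.log 2)
  have hlog : HasDerivAt Real.log (1 / x) x := by
    simpa using Real.hasDerivAt_log hxne
  have h2 : HasDerivAt (fun x : ℝ => (x + 2) * Real.log x)
      (1 * Real.log x + (x + 2) * (1 / x)) x :=
    ((hasDerivAt_id x).add_const 2).mul hlog
  have hlog2 : HasDerivAt (fun x : ℝ => Real.log (2 - x)) ((-1) / (2 - x)) x := by
    have : HasDerivAt (fun x : ℝ => 2 - x) (-1) x := by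
      simpa using (hasDerivAt_id x).const_sub 2
    exact this.log h2x
  have hlog3 : HasDerivAt (fun x : ℝ => Real.log (2 + x)) (1 / (2 + x)) x := by
    have : HasDerivAt (fun x : ℝ => 2 + x) (1) x := by
      simpa using (hasDerivAt_id x).const_add 2
    exact this.log h2x'
  have hq1 : HasDerivAt (fun x : ℝ => -(2 - x) ^ 2 / 2) (2 - x) x := by
    have h : HasDerivAt (fun x : ℝ => 2 - x) (-1) x := by
      simpa using (hasDerivAt_id x).const_sub 2
    have := (h.pow 2).neg.div_const 2
    refine this.congr_deriv ?_
    ring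
  have hq2 : HasDerivAt (fun x : ℝ => -(2 + x) ^ 2 / 2) (-(2 + x)) x := by
    have h : HasDerivAt (fun x : ℝ => 2 + x) (1) x := by
      simpa using (hasDerivAt_id x).const_add 2
    have := (h.pow 2).neg.div_const 2
    refine this.congr_deriv ?_
    ring
  have h3 : HasDerivAt (fun x : ℝ => (-(2 - x) ^ 2 / 2) * Real.log (2 - x))
      ((2 - x) * Real.log (2 - x) + (-(2 - x) ^ 2 / 2) * ((-1) / (2 - x))) x :=
    hq1.mul hlog2
  have h4 : HasDerivAt (fun x : ℝ => (-(2 + x) ^ 2 / 2) * Real.log (2 + x))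
      ((-(2 + x)) * Real.log (2 + x) + (-(2 + x) ^ 2 / 2) * (1 / (2 + x))) x :=
    hq2.mul hlog3
  have := ((h1.add h2).add h3).add h4
  refine this.congr_deriv ?_
  unfold F'
  field_simp
  ring

lemma hasDerivAt_F' {x : ℝ} (hx0 : 0 < x) (hx2 : x < 2) : HasDerivAt F' (F'' x) x := by
  have hxne : x ≠ 0 := ne_of_gt hx0
  have h2x : (2 : ℝ) - x ≠ 0 := by linarith
  have h2x' : (2 : ℝ) + x ≠ 0 := by linarith
  have hlog : HasDerivAt Real.log (1 / x) x := by
    simpa using Real.hasDerivAt_log hxne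
  have hlog2 : HasDerivAt (fun x : ℝ => Real.log (2 - x)) ((-1) / (2 - x)) x := by
    have : HasDerivAt (fun x : ℝ => 2 - x) (-1) x := by
      simpa using (hasDerivAt_id x).const_sub 2
    exact this.log h2x
  have hlog3 : HasDerivAt (fun x : ℝ => Real.log (2 + x)) (1 / (2 + x)) x := by
    have : HasDerivAt (fun x : ℝ => 2 + x) (1) x := by
      simpa using (hasDerivAt_id x).const_add 2
    exact this.log h2x'
  have hinv : HasDerivAt (fun x : ℝ => (x + 2) / x) ((1 * x - (x + 2) * 1) / x ^ 2) x :=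
    ((hasDerivAt_id x).add_const 2).div (hasDerivAt_id x) hxne
  have ha : HasDerivAt (fun x : ℝ => (2 - x) * Real.log (2 - x) + (2 - x) / 2)
      (((-1) * Real.log (2 - x) + (2 - x) * ((-1) / (2 - x))) + (-1) / 2) x := by
    have hm : HasDerivAt (fun x : ℝ => (2 - x) * Real.log (2 - x))
        ((-1) * Real.log (2 - x) + (2 - x) * ((-1) / (2 - x))) x := by
      have h : HasDerivAt (fun x : ℝ => 2 - x) (-1) x := by
        simpa using (hasDerivAt_id x).const_sub 2
      exact h.mul hlog2
    have hs : HasDerivAt (fun x : ℝ => (2 - x) / 2) ((-1) / 2) x := by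
      have : HasDerivAt (fun x : ℝ => 2 - x) (-1) x := by
        simpa using (hasDerivAt_id x).const_sub 2
      exact this.div_const 2
    exact hm.add hs
  have hb : HasDerivAt (fun x : ℝ => (2 + x) * Real.log (2 + x) + (2 + x) / 2)
      ((1 * Real.log (2 + x) + (2 + x) * (1 / (2 + x))) + 1 / 2) x := by
    have hm : HasDerivAt (fun x : ℝ => (2 + x) * Real.log (2 + x))
        (1 * Real.log (2 + x) + (2 + x) * (1 / (2 + x))) x := by
      have : HasDerivAt (fun x : ℝ => 2 + x) (1) x := by
        simpa using (hasDerivAt_id x).const_add 2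
      exact this.mul hlog3
    have hs : HasDerivAt (fun x : ℝ => (2 + x) / 2) (1 / 2) x := by
      have : HasDerivAt (fun x : ℝ => 2 + x) (1) x := by
        simpa using (hasDerivAt_id x).const_add 2
      exact this.div_const 2
    exact hm.add hs
  have := (((hasDerivAt_const x (Real.log 2)).add (hlog.add hinv)).add ha).sub hb
  refine this.congr_deriv ?_
  unfold F''
  field_simp
  ring

lemma F''_nonpos {x : ℝ} (hx0 : 0 < x) (hx : x < 1.32) : F'' x ≤ 0 := by
  have hxne : x ≠ 0 := ne_of_gt hx0
  have h2x : (0 : ℝ) < 2 - x := by linarith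
  have h2x' : (0 : ℝ) < 2 + x := by linarith
  have h1 : 1 / x - 2 / x ^ 2 = (x - 2) / x ^ 2 := by field_simp
  have h2 : (x - 2) / x ^ 2 ≤ 0 :=
    div_nonpos_iff.mpr (Or.inr ⟨by linarith, by positivity⟩)
  have hlogsum : Real.log (2 - x) + Real.log (2 + x) ≥ 0 := by
    rw [← Real.log_mul (ne_of_gt h2x) (ne_of_gt h2x')]
    apply Real.log_nonneg
    nlinarith
  unfold F''
  rw [h1]
  linarith

lemma log_Psi_eq {x : ℝ} (hx0 : 0 < x) (hx2 : x < 2) : Real.log (Psi x) = F x := by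
  have h2x : (0 : ℝ) < 2 - x := by linarith
  have h2x' : (0 : ℝ) < 2 + x := by linarith
  have p1 : (0 : ℝ) < (2 : ℝ) ^ (x + 6) := Real.rpow_pos_of_pos (by norm_num) _
  have p2 : (0 : ℝ) < x ^ (x + 2) := Real.rpow_pos_of_pos hx0 _
  have p3 : (0 : ℝ) < (2 - x) ^ (-(2 - x) ^ 2 / 2) := Real.rpow_pos_of_pos h2x _
  have p4 : (0 : ℝ) < (2 + x) ^ (-(2 + x) ^ 2 / 2) := Real.rpow_pos_of_pos h2x' _
  unfold Psi F
  rw [Real.log_mul (by positivity) (ne_of_gt p4), Real.log_mul (by positivity) (ne_of_gt p3),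
    Real.log_mul (ne_of_gt p1) (ne_of_gt p2),
    Real.log_rpow (by norm_num), Real.log_rpow hx0, Real.log_rpow h2x, Real.log_rpow h2x']

theorem stmt8 : ConcaveOn ℝ (Set.Ioc (0 : ℝ) 1.32) (fun σ => Real.log (Psi σ)) := by
  have hint : interior (Set.Ioc (0 : ℝ) 1.32) = Set.Ioo (0 : ℝ) 1.32 := interior_Ioc
  have hF : ConcaveOn ℝ (Set.Ioc (0 : ℝ) 1.32) F := by
    apply concaveOn_of_hasDerivWithinAt2_nonpos (f' := F') (f'' := F'') (convex_Ioc _ _)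
    · intro x hx
      exact (hasDerivAt_F hx.1 (by linarith [hx.2] : x < 2)).continuousAt.continuousWithinAt
    · intro x hx
      rw [hint] at hx
      exact (hasDerivAt_F hx.1 (by linarith [hx.2] : x < 2)).hasDerivWithinAt
    · intro x hx
      rw [hint] at hx
      exact (hasDerivAt_F' hx.1 (by linarith [hx.2] : x < 2)).hasDerivWithinAt
    · intro x hx
      rw [hint] at hx
      exact F''_nonpos hx.1 (by exact_mod_cast hx.2)
  exact hF.congr fun x hx => (log_Psi_eq hx.1 (by linarith [hx.2] : x < 2)).symm
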